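/- arXiv:2310.11930 — 6 statements merged into one kernel-verified Lean document; each statement's English description precedes it below -/
import Mathlib

section
/- Let A be an affine space (over a field F) defined intrinsically via a heap operation ⟨-,-,-⟩ and an action λ ▷_a b satisfying the affine space axioms, and fix o ∈ A. Then A with addition a + b := ⟨a,o,b⟩ and scalar multiplication λ·a := λ ▷_o a is a vector space over F with zero vector o. -/
/-- An intrinsic affine space over a field `F`: a set with an abelian heap
operation `t` and scaled actions `act λ a b = λ ▷_a b` satisfying the axioms
of Brzeziński–Papworth. -/
structure AffSp (F : Type*) [Field F] (A : Type*) where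
  t : A → A → A → A
  act : F → A → A → A
  t_assoc : ∀ a b c d e : A, t (t a b c) d e = t a b (t c d e)
  t_malcev : ∀ a b : A, t a a b = b
  t_symm : ∀ a b c : A, t a b c = t c b a
  act_heap1 : ∀ (l m n : F) (a b : A),
    act (l - m + n) a b = t (act l a b) (act m a b) (act n a b)
  act_heap2 : ∀ (l : F) (a b c d : A),
    act l a (t b c d) = t (act l a b) (act l a c) (act l a d)
  act_mul : ∀ (l m : F) (a b : A), act (l * m) a b = act l a (act m a b)
  act_one : ∀ a b : A, act 1 a b = b
  act_zero : ∀ a b : A, act 0 a b = a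
  base_change : ∀ (l : F) (a b c : A), act l a b = t (act l c b) (act l c a) a

/-!
Retracting the heap at `o` is the standard passage from an abelian heap to an abelian group,
with `⟨o,a,o⟩` as the inverse of `a`. The module laws are the two heap-compatibility axioms of
the action read at the base point `o`, once one knows that `o` is fixed by every `λ ▷_o`:
`λ ▷_o o = (λ * 0) ▷_o o = λ ▷_o (0 ▷_o o) = 0 ▷_o o = o`.
-/

namespace AffSp

variable {F A : Type*} [Field F] (S : AffSp F A)

theorem t_t_cancel (a b c : A) : S.t a b (S.t b a c) = c := by
  rw [← S.t_assoc, S.t_symm a b b, S.t_malcev, S.t_malcev]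

theorem act_self (l : F) (a : A) : S.act l a a = a := by
  simpa only [mul_zero, S.act_zero] using (S.act_mul l 0 a a).symm

theorem act_add (l m : F) (a b : A) : S.act (l + m) a b = S.t (S.act l a b) a (S.act m a b) := by
  rw [← sub_zero l, S.act_heap1, S.act_zero, sub_zero]

theorem act_t_base (l : F) (a b c : A) :
    S.act l a (S.t b a c) = S.t (S.act l a b) a (S.act l a c) := by
  rw [S.act_heap2, S.act_self]

end AffSp

/-- For an intrinsic affine space `A` over `F` and any `o ∈ A`, the operations
`a + b := ⟨a,o,b⟩` and `λ • a := λ ▷_o a` make `A` a vector space over `F`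
with zero vector `o`. -/
theorem intrinsic_affine_space_retract_is_vector_space
    {F A : Type*} [Field F] (S : AffSp F A) (o : A) :
    let add : A → A → A := fun a b => S.t a o b
    let neg : A → A := fun a => S.t o a o
    let smul : F → A → A := fun l a => S.act l o a
    -- abelian group axioms with zero vector `o`
    (∀ a b c : A, add (add a b) c = add a (add b c)) ∧
    (∀ a b : A, add a b = add b a) ∧
    (∀ a : A, add o a = a) ∧
    (∀ a : A, add a (neg a) = o) ∧
    -- module axioms
    (∀ (l : F) (a b : A), smul l (add a b) = add (smul l a) (smul l b)) ∧
    (∀ (l m : F) (a : A), smul (l + m) a = add (smul l a) (smul m a)) ∧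
    (∀ (l m : F) (a : A), smul (l * m) a = smul l (smul m a)) ∧
    (∀ a : A, smul 1 a = a) ∧
    (∀ a : A, smul 0 a = o) ∧
    (∀ l : F, smul l o = o) := by
  intro add neg smul
  exact ⟨fun a b c => S.t_assoc a o b o c, fun a b => S.t_symm a o b, fun a => S.t_malcev o a,
    fun a => S.t_t_cancel a o o, fun l a b => S.act_t_base l o a b, fun l m a => S.act_add l m o a,
    fun l m a => S.act_mul l m o a, fun a => S.act_one o a, fun a => S.act_zero o a,
    fun l => S.act_self l o⟩
end

section
/- Let A be a Lie affgebra and o ∈ A. Define [a,b]_o := [a,b] - [a,o] + [o,o] - [o,b] in the abelian group A_o (with neutral element o). Then [-,-]_o is a Lie bracket on the vector space V(A_o): it is bilinear, antisymmetric ([a,b]_o = -[b,a]_o), and satisfies the Jacobi identity. -/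
/-- A Lie affgebra: an intrinsic affine space with a bi-affine bracket
satisfying the affine antisymmetry and affine Jacobi identities. -/
structure LieAffgebra (F : Type*) [Field F] (A : Type*) extends AffSp F A where
  br : A → A → A
  br_left_t : ∀ a b c x : A, br (t a b c) x = t (br a x) (br b x) (br c x)
  br_left_act : ∀ (l : F) (a b x : A), br (act l a b) x = act l (br a x) (br b x)
  br_right_t : ∀ x a b c : A, br x (t a b c) = t (br x a) (br x b) (br x c)
  br_right_act : ∀ (l : F) (x a b : A), br x (act l a b) = act l (br x a) (br x b)
  br_antisym : ∀ a b : A, t (br a b) (br a a) (br b a) = br b b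
  br_jacobi : ∀ a b c : A,
    t (br a (br b c)) (br a a) (t (br b (br c a)) (br b b) (br c (br a b))) = br c c

/-!
Fixing an origin turns the affine space into a vector space in which `⟨x, y, z⟩ = x - y + z`
and `l ▷_u v = l • v - l • u + u`. In these terms a bi-affine bracket is bilinear up to constant and
one-variable terms, which `[a, b] - [a, 0] + [0, 0] - [0, b]` removes. The affine antisymmetry and
Jacobi identities, instantiated with some of the arguments replaced by the origin and added up
with alternating signs, give the linear ones.
-/

namespace AffSp

variable {F A : Type*} [Field F] (S : AffSp F A)

theorem t_self_right (a b : A) : S.t a b b = a :=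
  (S.t_symm a b b).trans (S.t_malcev b a)

/-- The abelian group `A_o`. -/
abbrev retractAddCommGroup (o : A) : AddCommGroup A :=
  letI : Zero A := ⟨o⟩
  letI : Add A := ⟨fun a b => S.t a o b⟩
  letI : Neg A := ⟨fun a => S.t o a o⟩
  { nsmul := nsmulRec
    zsmul := zsmulRec
    add_assoc a b c := S.t_assoc a o b o c
    zero_add := S.t_malcev o
    add_zero a := S.t_self_right a o
    add_comm a b := S.t_symm a o b
    neg_add_cancel a := by
      change S.t (S.t o a o) o a = o
      rw [S.t_assoc, S.t_malcev, S.t_self_right] }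

theorem retract_t (o : A) :
    letI := S.retractAddCommGroup o
    ∀ x y z : A, S.t x y z = x - y + z := by
  intro x y z
  change S.t x y z = S.t (S.t x o (S.t o y o)) o z
  rw [← S.t_assoc x o o y o, S.t_self_right, S.t_assoc, S.t_malcev]

/-- The vector space `V(A_o)`. -/
abbrev retractModule (o : A) :
    letI := S.retractAddCommGroup o
    Module F A :=
  letI := S.retractAddCommGroup o
  { smul l a := S.act l o a
    one_smul := S.act_one o
    mul_smul l m := S.act_mul l m o
    smul_zero l := S.act_self l o
    smul_add l a b := by
      change S.act l o (S.t a o b) = S.t (S.act l o a) o (S.act l o b)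
      rw [S.act_heap2, S.act_self]
    add_smul l m a := by
      change S.act (l + m) o a = S.t (S.act l o a) o (S.act m o a)
      rw [← sub_zero l, S.act_heap1, S.act_zero, sub_zero]
    zero_smul := S.act_zero o }

theorem act_eq_smul_sub_smul_add [AddCommGroup A] [Module F A]
    (ht : ∀ x y z : A, S.t x y z = x - y + z) (hs : ∀ (l : F) (v : A), S.act l 0 v = l • v)
    (l : F) (u v : A) : S.act l u v = l • v - l • u + u := by
  rw [S.base_change l u v 0, ht, hs, hs]

end AffSp

namespace LieAffgebra

variable {F A : Type*} [Field F] [AddCommGroup A] (L : LieAffgebra F A)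

/-- The bracket `[a, b]_0` of the retract at the origin `0`. -/
def linearBr (a b : A) : A :=
  L.br a b - L.br a 0 + L.br 0 0 - L.br 0 b

variable (ht : ∀ x y z : A, L.t x y z = x - y + z)
include ht

theorem br_add_left (a b x : A) : L.br (a + b) x = L.br a x - L.br 0 x + L.br b x := by
  rw [← sub_zero a, ← ht, L.br_left_t, ht, sub_zero]

theorem br_add_right (x a b : A) : L.br x (a + b) = L.br x a - L.br x 0 + L.br x b := by
  rw [← sub_zero a, ← ht, L.br_right_t, ht, sub_zero]

theorem br_sub_add_sub_right (x p q r s : A) :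
    L.br x (p - q + r - s) = L.br x p - L.br x q + L.br x r - L.br x s + L.br x 0 := by
  rw [← add_zero (p - q + r - s)]
  simp only [← ht, L.br_right_t]

theorem linearBr_add_left (a b x : A) :
    L.linearBr (a + b) x = L.linearBr a x + L.linearBr b x := by
  simp only [linearBr, L.br_add_left ht]
  abel

theorem linearBr_add_right (x a b : A) :
    L.linearBr x (a + b) = L.linearBr x a + L.linearBr x b := by
  simp only [linearBr, L.br_add_right ht]
  abel

theorem linearBr_antisymm (a b : A) : L.linearBr a b = -L.linearBr b a := by
  have h x y := (ht _ _ _).symm.trans (L.br_antisym x y)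
  simp only [linearBr]
  linear_combination (norm := abel) h a b - h a 0 - h 0 b

theorem linearBr_jacobi (a b c : A) :
    L.linearBr a (L.linearBr b c) + (L.linearBr b (L.linearBr c a) + L.linearBr c (L.linearBr a b))
      = 0 := by
  have h x y z := ((ht _ _ _).trans (congrArg _ (ht _ _ _))).symm.trans (L.br_jacobi x y z)
  simp only [linearBr, L.br_sub_add_sub_right ht]
  linear_combination (norm := abel) h a b c - h a b 0 - h a 0 c + h a 0 0 - h b c 0 + h b 0 0
    + h c 0 0 - h 0 0 0

variable [Module F A] (hs : ∀ (l : F) (v : A), L.act l 0 v = l • v)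
include hs

theorem br_smul_left (l : F) (a x : A) :
    L.br (l • a) x = l • L.br a x - l • L.br 0 x + L.br 0 x := by
  rw [← hs, L.br_left_act, L.act_eq_smul_sub_smul_add ht hs]

theorem br_smul_right (l : F) (x a : A) :
    L.br x (l • a) = l • L.br x a - l • L.br x 0 + L.br x 0 := by
  rw [← hs, L.br_right_act, L.act_eq_smul_sub_smul_add ht hs]

theorem linearBr_smul_left (l : F) (a x : A) : L.linearBr (l • a) x = l • L.linearBr a x := by
  simp only [linearBr, L.br_smul_left ht hs]
  module

theorem linearBr_smul_right (l : F) (x a : A) : L.linearBr x (l • a) = l • L.linearBr x a := by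
  simp only [linearBr, L.br_smul_right ht hs]
  module

end LieAffgebra

/-- Let `A` be a Lie affgebra and `o ∈ A`. In the abelian group `A_o`
(with `x + y = ⟨x,o,y⟩`, neutral element `o`, `-x = ⟨o,x,o⟩`, so that
`x - y + z = ⟨x,y,z⟩`), the bracket `[a,b]_o := [a,b] - [a,o] + [o,o] - [o,b]`
is bilinear, antisymmetric and satisfies the Jacobi identity, i.e. it is a
Lie bracket on the vector space `V(A_o)`. -/
theorem lie_affgebra_retract_is_lie_algebra
    {F A : Type*} [Field F] (L : LieAffgebra F A) (o : A) :
    let add : A → A → A := fun a b => L.t a o b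
    let neg : A → A := fun a => L.t o a o
    let smul : F → A → A := fun l a => L.act l o a
    -- `[a,b]_o = [a,b] - [a,o] + [o,o] - [o,b]` in `A_o`
    let bro : A → A → A := fun a b =>
      add (L.t (L.br a b) (L.br a o) (L.br o o)) (neg (L.br o b))
    -- bilinearity
    (∀ a b x : A, bro (add a b) x = add (bro a x) (bro b x)) ∧
    (∀ (l : F) (a x : A), bro (smul l a) x = smul l (bro a x)) ∧
    (∀ a b x : A, bro x (add a b) = add (bro x a) (bro x b)) ∧
    (∀ (l : F) (a x : A), bro x (smul l a) = smul l (bro x a)) ∧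
    -- antisymmetry
    (∀ a b : A, bro a b = neg (bro b a)) ∧
    -- Jacobi identity
    (∀ a b c : A,
      add (bro a (bro b c)) (add (bro b (bro c a)) (bro c (bro a b))) = o) := by
  intro add neg smul bro
  let := L.retractAddCommGroup o
  let := L.retractModule o
  have ht : ∀ x y z : A, L.t x y z = x - y + z := L.retract_t o
  have hs : ∀ (l : F) (v : A), L.act l 0 v = l • v := fun _ _ => rfl
  have hbro : bro = L.linearBr := by
    funext a b
    simp only [bro, add, neg, ht, LieAffgebra.linearBr, show o = 0 from rfl]
    abel
  rw [hbro]
  exact ⟨L.linearBr_add_left ht, L.linearBr_smul_left ht hs,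
    fun a b x => L.linearBr_add_right ht x a b, fun l a x => L.linearBr_smul_right ht hs l x a,
    L.linearBr_antisymm ht, L.linearBr_jacobi ht⟩
end

section
/- On the affine line 𝔸 over a field F, for any ζ ∈ F the bracket [x,y] := ζ ▷_x y (i.e. [x,y] = ζy + (1-ζ)x) is a Lie affgebra bracket: it is bi-affine and satisfies ⟨[a,b],[a,a],[b,a]⟩ = [b,b] and the affine Jacobi identity ⟨[a,[b,c]],[a,a],[b,[c,a]],[b,b],[c,[a,b]]⟩ = [c,c]. -/
/-- On the affine line `𝔸 = F` (with `⟨a,b,c⟩ = a - b + c` and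
`λ ▷_a b = λb + (1-λ)a`), for any `ζ ∈ F` the bracket `[x,y] := ζ ▷_x y`
is a Lie affgebra bracket: bi-affine, and it satisfies the affine
antisymmetry and Jacobi identities. -/
theorem affine_line_zeta_bracket_is_lie_affgebra {F : Type*} [Field F] (ζ : F) :
    let t : F → F → F → F := fun a b c => a - b + c
    let act : F → F → F → F := fun l a b => l * b + (1 - l) * a
    let br : F → F → F := fun x y => ζ * y + (1 - ζ) * x
    -- bi-affine
    (∀ a b c x : F, br (t a b c) x = t (br a x) (br b x) (br c x)) ∧
    (∀ (l : F) (a b x : F), br (act l a b) x = act l (br a x) (br b x)) ∧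
    (∀ x a b c : F, br x (t a b c) = t (br x a) (br x b) (br x c)) ∧
    (∀ (l : F) (x a b : F), br x (act l a b) = act l (br x a) (br x b)) ∧
    -- affine antisymmetry
    (∀ a b : F, t (br a b) (br a a) (br b a) = br b b) ∧
    -- affine Jacobi identity
    (∀ a b c : F,
      t (br a (br b c)) (br a a) (t (br b (br c a)) (br b b) (br c (br a b))) = br c c) := by
  dsimp only
  refine ⟨?_, ?_, ?_, ?_, ?_, ?_⟩ <;> intros <;> ring
end

section
/- Let 𝔸 = F be the affine line with ⟨a,b,c⟩ = a-b+c and λ ▷_a b = λb+(1-λ)a, and for ζ ∈ F let [x,y]_ζ := ζy + (1-ζ)x. If ζ₁ ≠ ζ₂, then there is no bijective affine map f : 𝔸 → 𝔸 with f([x,y]_{ζ₁}) = [f(x),f(y)]_{ζ₂} for all x,y; i.e. the Lie affgebras (𝔸,[-,-]_{ζ₁}) and (𝔸,[-,-]_{ζ₂}) are non-isomorphic. -/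
theorem mul_eq_mul_of_forall_affine_bracket {R : Type*} [CommRing R] {ζ₁ ζ₂ α β : R}
    (hf : ∀ x y : R,
      α * (ζ₁ * y + (1 - ζ₁) * x) + β = ζ₂ * (α * y + β) + (1 - ζ₂) * (α * x + β)) :
    α * ζ₁ = α * ζ₂ := by
  linear_combination hf 0 1

/-- On the affine line `𝔸 = F`, for `ζ ∈ F` let `[x,y]_ζ := ζy + (1-ζ)x`.
If `ζ₁ ≠ ζ₂`, there is no bijective affine map `f(x) = αx + β` (`α ≠ 0`)
intertwining the two brackets: the Lie affgebras `(𝔸,[-,-]_{ζ₁})` and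
`(𝔸,[-,-]_{ζ₂})` are non-isomorphic. -/
theorem affine_line_zeta_brackets_nonisomorphic {F : Type*} [Field F]
    (ζ₁ ζ₂ : F) (h : ζ₁ ≠ ζ₂) :
    ¬ ∃ α β : F, α ≠ 0 ∧
      ∀ x y : F,
        α * (ζ₁ * y + (1 - ζ₁) * x) + β =
          ζ₂ * (α * y + β) + (1 - ζ₂) * (α * x + β) := by
  rintro ⟨α, β, hα, hf⟩
  exact h (mul_left_cancel₀ hα (mul_eq_mul_of_forall_affine_bracket hf))
end

section
/- On SNA_n(ℂ), the bracket [a,b] := ab - ba + b takes values in SNA_n(ℂ), is bi-affine, and satisfies the Lie affgebra antisymmetry ⟨[a,b],[a,a],[b,a]⟩ = [b,b] and the affine Jacobi identity ⟨[a,[b,c]],[a,a],[b,[c,a]],[b,b],[c,[a,b]]⟩ = [c,c], where ⟨x,y,z⟩ = x - y + z. -/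
/-- `SNA n ℂ`: traceless `(n+1) × (n+1)` complex matrices in which the sum of
the entries in every row and every column equals `1`. -/
def SNA (n : ℕ) : Set (Matrix (Fin (n + 1)) (Fin (n + 1)) ℂ) :=
  {a | a.trace = 0 ∧ ∀ j, (∑ i, a i j) = 1 ∧ (∑ i, a j i) = 1}

lemma SNA_mul_col {n : ℕ} {a b : Matrix (Fin (n + 1)) (Fin (n + 1)) ℂ}
    (ha : a ∈ SNA n) (hb : b ∈ SNA n) (j : Fin (n + 1)) :
    (∑ i, (a * b) i j) = 1 := by
  simp only [Matrix.mul_apply]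
  rw [Finset.sum_comm]
  have : ∀ k ∈ Finset.univ, (∑ i, a i k * b k j) = b k j := by
    intro k _
    rw [← Finset.sum_mul, (ha.2 k).1, one_mul]
  rw [Finset.sum_congr rfl this, (hb.2 j).1]

lemma SNA_mul_row {n : ℕ} {a b : Matrix (Fin (n + 1)) (Fin (n + 1)) ℂ}
    (ha : a ∈ SNA n) (hb : b ∈ SNA n) (j : Fin (n + 1)) :
    (∑ i, (a * b) j i) = 1 := by
  simp only [Matrix.mul_apply]
  rw [Finset.sum_comm]
  have : ∀ k ∈ Finset.univ, (∑ i, a j k * b k i) = a j k := by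
    intro k _
    rw [← Finset.mul_sum, (hb.2 k).2, mul_one]
  rw [Finset.sum_congr rfl this, (ha.2 j).2]

lemma SNA_br_mem {n : ℕ} {a b : Matrix (Fin (n + 1)) (Fin (n + 1)) ℂ}
    (ha : a ∈ SNA n) (hb : b ∈ SNA n) : a * b - b * a + b ∈ SNA n := by
  refine ⟨?_, fun j => ⟨?_, ?_⟩⟩
  · rw [Matrix.trace_add, Matrix.trace_sub, Matrix.trace_mul_comm a b, sub_self, zero_add, hb.1]
  · simp only [Matrix.add_apply, Matrix.sub_apply, Finset.sum_add_distrib,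
      Finset.sum_sub_distrib]
    rw [SNA_mul_col ha hb, SNA_mul_col hb ha, (hb.2 j).1]; ring
  · simp only [Matrix.add_apply, Matrix.sub_apply, Finset.sum_add_distrib,
      Finset.sum_sub_distrib]
    rw [SNA_mul_row ha hb, SNA_mul_row hb ha, (hb.2 j).2]; ring

/-- On `SNA n ℂ`, the bracket `[a,b] := ab - ba + b` takes values in
`SNA n ℂ`, is bi-affine, and satisfies the Lie affgebra antisymmetry and
affine Jacobi identities, where `⟨x,y,z⟩ = x - y + z`. -/
theorem SNA_bracket_is_lie_affgebra (n : ℕ) :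
    let M := Matrix (Fin (n+1)) (Fin (n+1)) ℂ
    let t : M → M → M → M := fun a b c => a - b + c
    let act : ℂ → M → M → M := fun l a b => l • b + (1 - l) • a
    let br : M → M → M := fun a b => a * b - b * a + b
    -- the bracket takes values in `SNA n ℂ`
    (∀ a ∈ SNA n, ∀ b ∈ SNA n, br a b ∈ SNA n) ∧
    -- bi-affine
    (∀ a ∈ SNA n, ∀ b ∈ SNA n, ∀ c ∈ SNA n, ∀ x ∈ SNA n,
      br (t a b c) x = t (br a x) (br b x) (br c x)) ∧
    (∀ (l : ℂ), ∀ a ∈ SNA n, ∀ b ∈ SNA n, ∀ x ∈ SNA n,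
      br (act l a b) x = act l (br a x) (br b x)) ∧
    (∀ x ∈ SNA n, ∀ a ∈ SNA n, ∀ b ∈ SNA n, ∀ c ∈ SNA n,
      br x (t a b c) = t (br x a) (br x b) (br x c)) ∧
    (∀ (l : ℂ), ∀ x ∈ SNA n, ∀ a ∈ SNA n, ∀ b ∈ SNA n,
      br x (act l a b) = act l (br x a) (br x b)) ∧
    -- affine antisymmetry
    (∀ a ∈ SNA n, ∀ b ∈ SNA n, t (br a b) (br a a) (br b a) = br b b) ∧
    -- affine Jacobi identity
    (∀ a ∈ SNA n, ∀ b ∈ SNA n, ∀ c ∈ SNA n,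
      t (br a (br b c)) (br a a) (t (br b (br c a)) (br b b) (br c (br a b))) = br c c) := by
  intro M t act br
  refine ⟨?_, ?_, ?_, ?_, ?_, ?_, ?_⟩
  · exact fun a ha b hb => SNA_br_mem ha hb
  · intro a _ b _ c _ x _; simp only [br, t, M]; noncomm_ring
  · intro l a _ b _ x _
    simp only [br, act, M, add_mul, mul_add, smul_mul_assoc, mul_smul_comm]
    module
  · intro x _ a _ b _ c _; simp only [br, t, M]; noncomm_ring
  · intro l x _ a _ b _
    simp only [br, act, M, add_mul, mul_add, smul_mul_assoc, mul_smul_comm]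
    module
  · intro a _ b _; simp only [br, t, M]; noncomm_ring
  · intro a _ b _ c _; simp only [br, t, M]; noncomm_ring
end

section
/- Fix o ∈ SNA_n(ℂ) and define on the induced vector space the bracket [a,b]_o := [a,b] - [a,o] + [o,o] - [o,b] where [x,y] = xy - yx + y. Then [a,b]_o = (a-o)(b-o) - (b-o)(a-o) + o, and the map a ↦ a - o is a Lie algebra isomorphism from (V(SNA_n(ℂ)_o), [-,-]_o) onto sl_{n+1}(ℂ)₀ with the commutator bracket. -/
/-- `sl_{n+1}(ℂ)₀` as a set: traceless matrices with vanishing row and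
column sums. -/
def sl0Set (n : ℕ) : Set (Matrix (Fin (n + 1)) (Fin (n + 1)) ℂ) :=
  {a | a.trace = 0 ∧ ∀ j, (∑ i, a i j) = 0 ∧ (∑ i, a j i) = 0}

/-! With `x = a - o`, `y = b - o` the reduced bracket `[a,b]ₒ` is `xy - yx + o` by a ring
identity. The unit row and column sums and the zero trace cancel in `a - o`, and adding `o`
back restores them, so `x ↦ x + o` inverts `a ↦ a - o`. -/

def affBracket {R : Type*} [Ring R] (x y : R) : R := x * y - y * x + y

theorem affBracket_reduced_eq {R : Type*} [Ring R] (a b o : R) :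
    affBracket a b - affBracket a o + affBracket o o - affBracket o b + o =
      (a - o) * (b - o) - (b - o) * (a - o) + o := by
  unfold affBracket
  noncomm_ring

theorem sub_mem_sl0Set {n : ℕ} {a b : Matrix (Fin (n + 1)) (Fin (n + 1)) ℂ}
    (ha : a ∈ SNA n) (hb : b ∈ SNA n) : a - b ∈ sl0Set n := by
  obtain ⟨hat, has⟩ := ha
  obtain ⟨hbt, hbs⟩ := hb
  refine ⟨by rw [Matrix.trace_sub, hat, hbt, sub_zero], fun j => ⟨?_, ?_⟩⟩
  · simp only [Matrix.sub_apply, Finset.sum_sub_distrib, (has j).1, (hbs j).1, sub_self]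
  · simp only [Matrix.sub_apply, Finset.sum_sub_distrib, (has j).2, (hbs j).2, sub_self]

theorem add_mem_SNA {n : ℕ} {x a : Matrix (Fin (n + 1)) (Fin (n + 1)) ℂ}
    (hx : x ∈ sl0Set n) (ha : a ∈ SNA n) : x + a ∈ SNA n := by
  obtain ⟨hxt, hxs⟩ := hx
  obtain ⟨hat, has⟩ := ha
  refine ⟨by rw [Matrix.trace_add, hxt, hat, add_zero], fun j => ⟨?_, ?_⟩⟩
  · simp only [Matrix.add_apply, Finset.sum_add_distrib, (hxs j).1, (has j).1, zero_add]
  · simp only [Matrix.add_apply, Finset.sum_add_distrib, (hxs j).2, (has j).2, zero_add]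

/-- Fix `o ∈ SNA n ℂ` and on the induced vector space `V(SNA n ℂ)_o` (with
`a +ₒ b = a - o + b`, `λ ·ₒ a = λa + (1-λ)o`, zero `o`) define
`[a,b]ₒ := [a,b] - [a,o] + [o,o] - [o,b]` (in the group with neutral `o`),
where `[x,y] = xy - yx + y`.  Then `[a,b]ₒ = (a-o)(b-o) - (b-o)(a-o) + o`,
and `a ↦ a - o` is a Lie algebra isomorphism onto `sl_{n+1}(ℂ)₀` with the
commutator bracket. -/
theorem SNA_linearisation_iso_sl0 (n : ℕ)
    (o : Matrix (Fin (n + 1)) (Fin (n + 1)) ℂ) (ho : o ∈ SNA n) :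
    let br : Matrix (Fin (n+1)) (Fin (n+1)) ℂ → _ → Matrix (Fin (n+1)) (Fin (n+1)) ℂ :=
      fun x y => x * y - y * x + y
    -- `x - y` and `x + y` in the group `A_o` (neutral element `o`)
    let bro : Matrix (Fin (n+1)) (Fin (n+1)) ℂ → _ → Matrix (Fin (n+1)) (Fin (n+1)) ℂ :=
      fun a b => br a b - br a o + br o o - br o b + o  -- alternating sum in `A_o`
    let φ : Matrix (Fin (n+1)) (Fin (n+1)) ℂ → Matrix (Fin (n+1)) (Fin (n+1)) ℂ :=
      fun a => a - o
    -- the reduced bracket is a shifted commutator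
    (∀ a ∈ SNA n, ∀ b ∈ SNA n,
      bro a b = (a - o) * (b - o) - (b - o) * (a - o) + o) ∧
    -- φ is a bijection from `SNA n ℂ` onto `sl0Set n`
    (∀ a ∈ SNA n, φ a ∈ sl0Set n) ∧
    (∀ x ∈ sl0Set n, ∃! a, a ∈ SNA n ∧ φ a = x) ∧
    -- φ is linear for the vector space structure `V((SNA n ℂ)_o)`
    (∀ a ∈ SNA n, ∀ b ∈ SNA n, φ (a - o + b) = φ a + φ b) ∧
    (∀ (l : ℂ), ∀ a ∈ SNA n, φ (l • a + (1 - l) • o) = l • φ a) ∧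
    -- φ intertwines `[-,-]ₒ` with the commutator
    (∀ a ∈ SNA n, ∀ b ∈ SNA n, φ (bro a b) = φ a * φ b - φ b * φ a) := by
  intro br bro φ
  have bro_eq : ∀ a b, bro a b = (a - o) * (b - o) - (b - o) * (a - o) + o :=
    fun a b => affBracket_reduced_eq a b o
  refine ⟨fun a _ b _ => bro_eq a b, fun a ha => sub_mem_sl0Set ha ho, fun x hx => ?_,
    fun a _ b _ => ?_, fun l a _ => ?_, fun a _ b _ => ?_⟩
  · exact ⟨x + o, ⟨add_mem_SNA hx ho, add_sub_cancel_right x o⟩,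
      fun a ⟨_, h⟩ => eq_add_of_sub_eq h⟩
  · show a - o + b - o = (a - o) + (b - o)
    abel
  · show l • a + (1 - l) • o - o = l • (a - o)
    module
  · show bro a b - o = φ a * φ b - φ b * φ a
    rw [bro_eq, add_sub_cancel_right]
end
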